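/- Apply the dqd transform (shift 0) to a positive upper bidiagonal matrix B with intermediate values d_1,…,d_n. Then (∑_{k=1}^n 1/d_k)^{-1} ≤ σ_min(B)², where σ_min(B)² is the smallest eigenvalue of B·Bᵀ. -/

import Mathlib

/-!
The inverse `C` of `B` is upper triangular, and reading `C * B = 1` column by column gives
`C i (j+1) = (δ i (j+1) - b j * C i j) / a (j+1)`. Hence the squared column norms satisfy
`‖c₀‖² = 1/a₀²` and `‖c_{j+1}‖² = (1 + b_j² ‖c_j‖²) / a_{j+1}²`, which is exactly the recurrence
of `1/d_j`; so `∑ 1/d_k` is the squared Frobenius norm of `C`. For a unit eigenvector `v` of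
`B * Bᵀ` with eigenvalue `λ`, `λ = ‖Bᵀ v‖²` and `v = Cᵀ (Bᵀ v)`, so Cauchy–Schwarz gives
`1 ≤ (∑ 1/d_k) λ`.
-/

open Matrix

/-- The `n×n` upper bidiagonal matrix with diagonal `a` and superdiagonal `b`. -/
def upperBidiagonal (n : ℕ) (a b : ℕ → ℝ) : Matrix (Fin n) (Fin n) ℝ :=
  Matrix.of fun i j => if (j : ℕ) = (i : ℕ) then a i
    else if (j : ℕ) = (i : ℕ) + 1 then b i else 0

theorem Matrix.mulVec_dotProduct_self_le {m n : Type*} [Fintype m] [Fintype n]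
    (A : Matrix m n ℝ) (w : n → ℝ) :
    A *ᵥ w ⬝ᵥ A *ᵥ w ≤ (∑ k, ∑ l, A k l ^ 2) * (w ⬝ᵥ w) := by
  simp only [dotProduct, mulVec, ← sq]
  rw [Finset.sum_mul]
  exact Finset.sum_le_sum fun k _ => Finset.sum_mul_sq_le_sq_mul_sq _ _ _

theorem one_le_sum_sq_mul_eigenvalue {ι : Type*} [Fintype ι] [DecidableEq ι]
    {B C : Matrix ι ι ℝ} (hBC : B * C = 1) (hM : (B * Bᵀ).IsHermitian) (i : ι) :
    1 ≤ (∑ k, ∑ l, C l k ^ 2) * hM.eigenvalues i := by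
  set v : ι → ℝ := ⇑(hM.eigenvectorBasis i)
  set w := Bᵀ *ᵥ v
  have hv : v ⬝ᵥ v = 1 := by
    have := real_inner_self_eq_norm_sq (hM.eigenvectorBasis i)
    rw [hM.eigenvectorBasis.orthonormal.1 i, one_pow,
      EuclideanSpace.inner_eq_star_dotProduct] at this
    simpa using this
  have hw : w ⬝ᵥ w = hM.eigenvalues i := by
    rw [hM.eigenvalues_eq i]
    simp [w, v, ← mulVec_mulVec, dotProduct_mulVec, mulVec_transpose]
  have hvw : v = Cᵀ *ᵥ w := by
    rw [mulVec_mulVec, ← transpose_mul, hBC, transpose_one, one_mulVec]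
  calc (1 : ℝ) = Cᵀ *ᵥ w ⬝ᵥ Cᵀ *ᵥ w := by rw [← hvw, hv]
    _ ≤ (∑ k, ∑ l, C l k ^ 2) * hM.eigenvalues i := by
      simpa [hw] using Cᵀ.mulVec_dotProduct_self_le w

noncomputable def upperBidiagonalInv (a b : ℕ → ℝ) : ℕ → ℕ → ℝ
  | i, 0 => if i = 0 then (a 0)⁻¹ else 0
  | i, j + 1 => if i = j + 1 then (a (j + 1))⁻¹ else -upperBidiagonalInv a b i j * b j / a (j + 1)

section
variable (a b : ℕ → ℝ)

theorem upperBidiagonalInv_self (j : ℕ) : upperBidiagonalInv a b j j = (a j)⁻¹ := by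
  cases j <;> simp [upperBidiagonalInv]

theorem upperBidiagonalInv_of_lt {i j : ℕ} (h : j < i) : upperBidiagonalInv a b i j = 0 := by
  induction j with
  | zero => simp [upperBidiagonalInv, h.ne']
  | succ j ih => simp [upperBidiagonalInv, h.ne', ih (by omega)]

theorem sum_mul_upperBidiagonal_zero {n : ℕ} (hn : 0 < n) (x : ℕ → ℝ) :
    ∑ l : Fin n, x l * upperBidiagonal n a b l ⟨0, hn⟩ = x 0 * a 0 := by
  simp only [upperBidiagonal, of_apply]
  rw [Fin.sum_univ_eq_sum_range
    (fun l => x l * if 0 = l then a l else if 0 = l + 1 then b l else 0)]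
  simp [hn.ne']

theorem sum_mul_upperBidiagonal_succ {n j : ℕ} (hj : j + 1 < n) (x : ℕ → ℝ) :
    ∑ l : Fin n, x l * upperBidiagonal n a b l ⟨j + 1, hj⟩ =
      x j * b j + x (j + 1) * a (j + 1) := by
  simp only [upperBidiagonal, of_apply]
  rw [Fin.sum_univ_eq_sum_range
    (fun l => x l * if j + 1 = l then a l else if j + 1 = l + 1 then b l else 0)]
  have hsplit : ∀ l, (x l * if j + 1 = l then a l else if j + 1 = l + 1 then b l else 0) =
      (if j = l then x l * b l else 0) + (if j + 1 = l then x l * a l else 0) := by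
    intro l; split_ifs <;> first | omega | ring
  simp only [hsplit, Finset.sum_add_distrib, Finset.sum_ite_eq, Finset.mem_range]
  simp [hj, (Nat.lt_succ_self j).trans hj]

theorem upperBidiagonalInv_mul_upperBidiagonal {n : ℕ} (ha : ∀ k < n, a k ≠ 0) :
    of (fun i j : Fin n => upperBidiagonalInv a b i j) * upperBidiagonal n a b = 1 := by
  ext i ⟨j, hj⟩
  simp only [mul_apply, of_apply, one_apply, Fin.ext_iff]
  cases j with
  | zero =>
    rw [sum_mul_upperBidiagonal_zero]
    by_cases hi : (i : ℕ) = 0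
    · simp [upperBidiagonalInv, hi, ha 0 hj]
    · simp [upperBidiagonalInv, hi]
  | succ j =>
    rw [sum_mul_upperBidiagonal_succ]
    by_cases hi : (i : ℕ) = j + 1
    · simp [hi, upperBidiagonalInv_of_lt, upperBidiagonalInv_self, ha (j + 1) hj]
    · simp only [upperBidiagonalInv, if_neg hi]
      field_simp [ha (j + 1) hj]
      ring

theorem sum_range_upperBidiagonalInv_sq_succ (j : ℕ) :
    ∑ i ∈ Finset.range (j + 2), upperBidiagonalInv a b i (j + 1) ^ 2 =
      (∑ i ∈ Finset.range (j + 1), upperBidiagonalInv a b i j ^ 2) * b j ^ 2 / a (j + 1) ^ 2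
        + (a (j + 1) ^ 2)⁻¹ := by
  rw [Finset.sum_range_succ, upperBidiagonalInv_self, inv_pow, Finset.sum_mul, Finset.sum_div]
  congr 1
  refine Finset.sum_congr rfl fun i hi => ?_
  rw [upperBidiagonalInv, if_neg (by have := Finset.mem_range.mp hi; omega)]
  ring

end

theorem inv_dqd_step {d a b : ℝ} (hd : 0 < d) (ha : a ≠ 0) :
    (d * a ^ 2 / (d + b ^ 2))⁻¹ = d⁻¹ * b ^ 2 / a ^ 2 + (a ^ 2)⁻¹ := by
  have : d + b ^ 2 ≠ 0 := by positivity
  field_simp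
  ring

section Dqd
variable {n : ℕ} {a b d : ℕ → ℝ}

theorem dqd_pos (ha : ∀ k < n, a k ≠ 0) (hd0 : d 0 = a 0 ^ 2)
    (hd_succ : ∀ k, k + 1 < n → d (k + 1) = d k * a (k + 1) ^ 2 / (d k + b k ^ 2)) :
    ∀ k < n, 0 < d k := by
  intro k hk
  have := ha k hk
  induction k with
  | zero => rw [hd0]; positivity
  | succ k ih =>
    have := ih (by omega) (ha k (by omega))
    rw [hd_succ k hk]
    positivity

theorem sum_range_upperBidiagonalInv_sq_eq_inv (ha : ∀ k < n, a k ≠ 0) (hd0 : d 0 = a 0 ^ 2)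
    (hd_succ : ∀ k, k + 1 < n → d (k + 1) = d k * a (k + 1) ^ 2 / (d k + b k ^ 2)) :
    ∀ j < n, ∑ i ∈ Finset.range (j + 1), upperBidiagonalInv a b i j ^ 2 = (d j)⁻¹ := by
  intro j
  induction j with
  | zero => intro _; simp [upperBidiagonalInv_self, hd0]
  | succ j ih =>
    intro hj
    rw [sum_range_upperBidiagonalInv_sq_succ, ih (by omega), hd_succ j hj,
      inv_dqd_step (dqd_pos ha hd0 hd_succ j (by omega)) (ha (j + 1) hj)]

theorem sum_sq_upperBidiagonalInv (ha : ∀ k < n, a k ≠ 0) (hd0 : d 0 = a 0 ^ 2)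
    (hd_succ : ∀ k, k + 1 < n → d (k + 1) = d k * a (k + 1) ^ 2 / (d k + b k ^ 2)) :
    ∑ k : Fin n, ∑ l : Fin n, upperBidiagonalInv a b l k ^ 2 =
      ∑ k ∈ Finset.range n, (d k)⁻¹ := by
  rw [Fin.sum_univ_eq_sum_range (fun k => ∑ l : Fin n, upperBidiagonalInv a b l k ^ 2)]
  refine Finset.sum_congr rfl fun k hk => ?_
  rw [Finset.mem_range] at hk
  rw [Fin.sum_univ_eq_sum_range (fun l => upperBidiagonalInv a b l k ^ 2),
    ← sum_range_upperBidiagonalInv_sq_eq_inv ha hd0 hd_succ k hk]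
  refine (Finset.sum_subset (Finset.range_subset_range.mpr hk) fun l hl hlk => ?_).symm
  simp only [Finset.mem_range, not_lt] at hl hlk
  simp [upperBidiagonalInv_of_lt a b (show k < l by omega)]

end Dqd

theorem dqd_harmonic_lower_bound_general (n : ℕ) (hn : 0 < n) (a b d : ℕ → ℝ)
    (ha : ∀ k < n, 0 < a k)
    (hd1 : d 0 = (a 0) ^ 2)
    (hdk : ∀ k, k + 1 < n → d (k + 1) = d k * (a (k + 1)) ^ 2 / (d k + (b k) ^ 2))
    (hM : (upperBidiagonal n a b * (upperBidiagonal n a b)ᵀ).IsHermitian) :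
    (∑ k ∈ Finset.range n, (d k)⁻¹)⁻¹ ≤ ⨅ i, hM.eigenvalues i := by
  have : Nonempty (Fin n) := ⟨⟨0, hn⟩⟩
  have ha' : ∀ k < n, a k ≠ 0 := fun k hk => (ha k hk).ne'
  have hS : 0 < ∑ k ∈ Finset.range n, (d k)⁻¹ := Finset.sum_pos
    (fun k hk => inv_pos.mpr (dqd_pos ha' hd1 hdk k (Finset.mem_range.mp hk)))
    ⟨0, Finset.mem_range.mpr hn⟩
  have hBC := mul_eq_one_comm.mp (upperBidiagonalInv_mul_upperBidiagonal a b ha')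
  refine le_ciInf fun i => ?_
  rw [inv_le_iff_one_le_mul₀' hS]
  simpa [sum_sq_upperBidiagonalInv ha' hd1 hdk] using one_le_sum_sq_mul_eigenvalue hBC hM i

/-- `(∑ 1/d_k)⁻¹` is a lower bound on the smallest eigenvalue of `B*Bᵀ`. -/
theorem dqd_harmonic_lower_bound (n : ℕ) (hn : 0 < n) (a b d : ℕ → ℝ)
    (ha : ∀ k < n, 0 < a k) (hb : ∀ k, k + 1 < n → 0 < b k)
    (hd1 : d 0 = (a 0) ^ 2)
    (hdk : ∀ k, k + 1 < n → d (k + 1) = d k * (a (k + 1)) ^ 2 / (d k + (b k) ^ 2))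
    (hM : (upperBidiagonal n a b * (upperBidiagonal n a b)ᵀ).IsHermitian) :
    (∑ k ∈ Finset.range n, (d k)⁻¹)⁻¹ ≤ ⨅ i, hM.eigenvalues i :=
  dqd_harmonic_lower_bound_general n hn a b d ha hd1 hdk hM
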